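/- arXiv:1804.06959 — 2 statements merged into one kernel-verified Lean document; each statement's English description precedes it below -/
import Mathlib

section
/- For all positive integers t₁, ℓ₁, t₂, ℓ₂ such that ℓ₁ < 2t₁ or ℓ₂ < 2t₂, there exists an integer N (depending only on t₁, ℓ₁, t₂, ℓ₂) such that every finite matroid M with the (t₁,ℓ₁,t₂,ℓ₂)-property satisfies |E(M)| < N; in particular, there are only finitely many such matroids up to isomorphism. -/
open Set

/-- A circuit of a matroid: a minimal dependent set. -/
def IsCircuit {α : Type*} (M : Matroid α) (C : Set α) : Prop :=
  M.Dep C ∧ ∀ D, D ⊂ C → ¬ M.Dep D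

/-- A cocircuit of a matroid: a circuit of the dual. -/
def IsCocircuit {α : Type*} (M : Matroid α) (C : Set α) : Prop :=
  IsCircuit M✶ C

/-- `M` has the `(t₁,ℓ₁,t₂,ℓ₂)`-property: every `t₁`-element subset of the ground set is
contained in an `ℓ₁`-element circuit, and every `t₂`-element subset is contained in an
`ℓ₂`-element cocircuit. -/
def HasQuadProperty {α : Type*} (M : Matroid α) (t₁ ℓ₁ t₂ ℓ₂ : ℕ) : Prop :=
  (∀ X ⊆ M.E, X.ncard = t₁ → ∃ C, IsCircuit M C ∧ C.ncard = ℓ₁ ∧ X ⊆ C) ∧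
  (∀ X ⊆ M.E, X.ncard = t₂ → ∃ C, IsCocircuit M C ∧ C.ncard = ℓ₂ ∧ X ⊆ C)

universe u

/-!
By duality we may assume `ℓ₁ < 2 t₁`, so `k := ℓ₁ - t₁ < t₁`. Fix a base `B` of rank `r`.
A finite union `U` of circuits of size at most `ℓ` satisfies `|U| ≤ ℓ |U \ I|` for every
independent `I ⊆ U`: adding the circuits one at a time, each circuit not yet covered contributes
at most `ℓ` new elements and one of them can be deleted without changing the closure.
In `M✶`, where the small cocircuits cover `E` and `E \ B` is a base, this gives `|E| ≤ ℓ₂ r`.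
In `M`, each `t₁`-subset of `B` lies in an `ℓ₁`-circuit `C` with `|C \ B| ≤ k`; the circuits
with a given trace `D = C \ B` lie in `B ∪ D`, so their union has at most `ℓ₁ k` elements, and
there are at most `(k + 1)(|E| + 1)^k` traces. Hence `(r choose t₁) = O(r^k)` with `k < t₁`,
which bounds `r` and therefore `|E|`.
-/

namespace Finset

variable {α : Type*} [DecidableEq α]

theorem card_le_two_pow_mul_card_of_forall_subset {𝒮 𝒯 : Finset (Finset α)} {ℓ : ℕ}
    (h𝒮 : ∀ X ∈ 𝒮, ∃ C ∈ 𝒯, X ⊆ C) (h𝒯 : ∀ C ∈ 𝒯, #C ≤ ℓ) : #𝒮 ≤ 2 ^ ℓ * #𝒯 := calc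
  #𝒮 ≤ #(𝒯.biUnion powerset) := card_le_card fun X hX => by
    obtain ⟨C, hC, hXC⟩ := h𝒮 X hX
    exact mem_biUnion.2 ⟨C, hC, mem_powerset.2 hXC⟩
  _ ≤ ∑ C ∈ 𝒯, #C.powerset := card_biUnion_le
  _ ≤ ∑ _C ∈ 𝒯, 2 ^ ℓ := sum_le_sum fun C hC => by
    rw [card_powerset]; exact Nat.pow_le_pow_right two_pos (h𝒯 C hC)
  _ = 2 ^ ℓ * #𝒯 := by rw [sum_const, smul_eq_mul, mul_comm]

theorem card_le_succ_mul_pow_of_forall_card_le {𝒟 : Finset (Finset α)} {E : Finset α} {k : ℕ}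
    (h𝒟 : ∀ D ∈ 𝒟, D ⊆ E ∧ #D ≤ k) : #𝒟 ≤ (k + 1) * (#E + 1) ^ k := calc
  #𝒟 ≤ #((range (k + 1)).biUnion fun j => E.powersetCard j) := card_le_card fun D hD =>
    mem_biUnion.2 ⟨#D, mem_range.2 (Nat.lt_succ_of_le (h𝒟 D hD).2),
      mem_powersetCard.2 ⟨(h𝒟 D hD).1, rfl⟩⟩
  _ ≤ ∑ j ∈ range (k + 1), #(E.powersetCard j) := card_biUnion_le
  _ ≤ ∑ _j ∈ range (k + 1), (#E + 1) ^ k := sum_le_sum fun j hj => by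
    rw [card_powersetCard]
    calc (#E).choose j ≤ #E ^ j := Nat.choose_le_pow _ _
      _ ≤ (#E + 1) ^ j := Nat.pow_le_pow_left (Nat.le_succ _) j
      _ ≤ (#E + 1) ^ k := Nat.pow_le_pow_right (Nat.succ_pos _) (mem_range_succ_iff.1 hj)
  _ = (k + 1) * (#E + 1) ^ k := by rw [sum_const, card_range, smul_eq_mul]

end Finset

theorem Nat.exists_lt_of_choose_le_mul_succ_pow {t k : ℕ} (hkt : k < t) (A : ℕ) :
    ∃ R, ∀ r, r.choose t ≤ A * (r + 1) ^ k → r < R := by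
  refine ⟨2 * t + 2 ^ t * t.factorial * A, fun r hr => ?_⟩
  by_contra! hR
  have h : (r + 1) * (r + 1) ^ k ≤ 2 ^ t * t.factorial * A * (r + 1) ^ k := calc
    (r + 1) * (r + 1) ^ k = (r + 1) ^ (k + 1) := Nat.pow_succ'.symm
    _ ≤ (r + 1) ^ t := Nat.pow_le_pow_right (succ_pos r) hkt
    _ ≤ (2 * (r + 1 - t)) ^ t := Nat.pow_le_pow_left (by omega) t
    _ = 2 ^ t * (r + 1 - t) ^ t := mul_pow _ _ _
    _ ≤ 2 ^ t * (t.factorial * r.choose t) := by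
      rw [← descFactorial_eq_factorial_mul_choose]
      exact Nat.mul_le_mul_left _ (pow_sub_le_descFactorial r t)
    _ ≤ 2 ^ t * (t.factorial * (A * (r + 1) ^ k)) := by gcongr
    _ = 2 ^ t * t.factorial * A * (r + 1) ^ k := by ring
  have := Nat.le_of_mul_le_mul_right h (by positivity)
  omega

lemma isCircuit_iff_isCircuit {α : Type*} {M : Matroid α} {C : Set α} :
    IsCircuit M C ↔ M.IsCircuit C := by
  rw [Matroid.isCircuit_iff_forall_ssubset, IsCircuit]
  refine and_congr_right fun hC => forall₂_congr fun D hDC => ?_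
  rw [Matroid.not_dep_iff (hDC.subset.trans hC.subset_ground)]

lemma HasQuadProperty.dual {α : Type*} {M : Matroid α} {t₁ ℓ₁ t₂ ℓ₂ : ℕ}
    (h : HasQuadProperty M t₁ ℓ₁ t₂ ℓ₂) : HasQuadProperty M✶ t₂ ℓ₂ t₁ ℓ₁ :=
  ⟨h.2, fun X hX hXt => by simpa [IsCocircuit, Matroid.dual_dual] using h.1 X hX hXt⟩

namespace Matroid

variable {α : Type*} {M : Matroid α} {ℓ : ℕ} {I X B : Set α}

lemma Indep.ncard_le_ncard_of_subset_closure (hI : M.Indep I) (hIX : I ⊆ M.closure X)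
    (hX : X.Finite) : I.ncard ≤ X.ncard := by
  have h : I.encard ≤ X.encard := calc
    I.encard ≤ M.eRk (M.closure X) := hI.encard_le_eRk_of_subset hIX
    _ = M.eRk X := M.eRk_closure_eq X
    _ ≤ X.encard := M.eRk_le_encard X
  exact ENat.toNat_le_toNat h hX.encard_lt_top.ne

lemma exists_subset_closure_sdiff_of_sUnion_isCircuit [M.Finite] {𝒞 : Set (Set α)}
    (h𝒞 : 𝒞.Finite) (hC : ∀ C ∈ 𝒞, M.IsCircuit C ∧ C.ncard ≤ ℓ) :
    ∃ Y ⊆ ⋃₀ 𝒞, ⋃₀ 𝒞 ⊆ M.closure (⋃₀ 𝒞 \ Y) ∧ (⋃₀ 𝒞).ncard ≤ ℓ * Y.ncard := by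
  induction 𝒞, h𝒞 using Set.Finite.induction_on with
  | empty => exact ⟨∅, by simp⟩
  | @insert C 𝒞 _ _ ih =>
    obtain ⟨hC₀, hC₀ℓ⟩ := hC C (mem_insert _ _)
    obtain ⟨Y, hYU, hUY, hUcard⟩ := ih fun D hD => hC D (mem_insert_of_mem _ hD)
    rw [sUnion_insert]
    set U := ⋃₀ 𝒞
    by_cases hCU : C ⊆ U
    · rw [union_eq_self_of_subset_left hCU]
      exact ⟨Y, hYU, hUY, hUcard⟩
    obtain ⟨y, hyC, hyU⟩ := not_subset.1 hCU
    have hUE : C ∪ U ⊆ M.E := union_subset hC₀.subset_ground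
      (sUnion_subset fun D hD => (hC D (mem_insert_of_mem _ hD)).1.subset_ground)
    set A := (C ∪ U) \ insert y Y
    have hUA : U ⊆ M.closure A :=
      hUY.trans (M.closure_subset_closure fun x hx => ⟨.inr hx.1, by
        rintro (rfl | hxY)
        exacts [hyU hx.1, hx.2 hxY]⟩)
    have hCA : C \ {y} ⊆ M.closure A := by
      rintro x ⟨hxC, hxy⟩
      by_cases hxU : x ∈ U
      · exact hUA hxU
      · exact M.subset_closure A (sdiff_subset.trans hUE)
          ⟨.inl hxC, by rintro (rfl | hxY); exacts [hxy rfl, hxU (hYU hxY)]⟩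
    refine ⟨insert y Y, insert_subset (.inl hyC) (hYU.trans subset_union_right),
      union_subset ((hC₀.subset_closure_sdiff_singleton y).trans
        (M.closure_subset_closure_of_subset_closure hCA)) hUA, ?_⟩
    have hY : Y.Finite := M.ground_finite.subset (hYU.trans (subset_union_right.trans hUE))
    calc (C ∪ U).ncard ≤ C.ncard + U.ncard := ncard_union_le C U
      _ ≤ ℓ + ℓ * Y.ncard := add_le_add hC₀ℓ hUcard
      _ = ℓ * (insert y Y).ncard := by
        rw [ncard_insert_of_notMem (fun h => hyU (hYU h)) hY]; ring

lemma ncard_sUnion_le_mul_ncard_sdiff [M.Finite] {𝒞 : Set (Set α)}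
    (hC : ∀ C ∈ 𝒞, M.IsCircuit C ∧ C.ncard ≤ ℓ) (hI : M.Indep I) (hIU : I ⊆ ⋃₀ 𝒞) :
    (⋃₀ 𝒞).ncard ≤ ℓ * (⋃₀ 𝒞 \ I).ncard := by
  have h𝒞 : 𝒞.Finite :=
    M.ground_finite.finite_subsets.subset fun C hC' => (hC C hC').1.subset_ground
  obtain ⟨Y, hYU, hUY, hUcard⟩ := exists_subset_closure_sdiff_of_sUnion_isCircuit h𝒞 hC
  have hU : (⋃₀ 𝒞).Finite := h𝒞.sUnion fun C hC' => (hC C hC').1.finite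
  have hIY := hI.ncard_le_ncard_of_subset_closure (hIU.trans hUY) hU.sdiff
  rw [ncard_sdiff hYU (hU.subset hYU)] at hIY
  have hYI : Y.ncard ≤ (⋃₀ 𝒞 \ I).ncard := by
    rw [ncard_sdiff hIU (hU.subset hIU)]
    have := ncard_le_ncard hYU hU
    omega
  exact hUcard.trans (Nat.mul_le_mul_left ℓ hYI)

lemma ncard_ground_le_mul_ncard_of_forall_mem_isCocircuit [M.Finite]
    (hcov : ∀ e ∈ M.E, ∃ K, M.IsCocircuit K ∧ K.ncard ≤ ℓ ∧ e ∈ K) (hB : M.IsBase B) :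
    M.E.ncard ≤ ℓ * B.ncard := by
  have hU : ⋃₀ {K | M.IsCocircuit K ∧ K.ncard ≤ ℓ} = M.E :=
    (sUnion_subset fun K hK => hK.1.subset_ground).antisymm fun e he =>
      let ⟨K, hK, hKℓ, heK⟩ := hcov e he
      ⟨K, ⟨hK, hKℓ⟩, heK⟩
  have := M✶.ncard_sUnion_le_mul_ncard_sdiff (𝒞 := {K | M.IsCocircuit K ∧ K.ncard ≤ ℓ})
    (fun K hK => hK) hB.compl_isBase_dual.indep (by rw [hU]; exact sdiff_subset)
  rwa [hU, sdiff_sdiff_cancel_left hB.subset_ground] at this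

lemma card_le_two_pow_mul_card_image_sdiff [M.Finite] [DecidableEq α] {B : Finset α}
    (hB : M.Indep B) {k : ℕ} {𝒯 : Finset (Finset α)}
    (h𝒯 : ∀ C ∈ 𝒯, M.IsCircuit C ∧ C.card ≤ ℓ ∧ (C \ B).card ≤ k) :
    𝒯.card ≤ 2 ^ (ℓ * k) * (𝒯.image (· \ B)).card := by
  refine Finset.card_le_mul_card_image 𝒯 _ fun D hD => ?_
  obtain ⟨C₀, hC₀, rfl⟩ := Finset.mem_image.1 hD
  set 𝒞 : Set (Set α) := {C | M.IsCircuit C ∧ C.ncard ≤ ℓ ∧ C ⊆ B ∪ ↑(C₀ \ B)}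
  have hU : (⋃₀ 𝒞).Finite :=
    M.ground_finite.subset (sUnion_subset fun C hC => hC.1.subset_ground)
  have hUB : ⋃₀ 𝒞 \ (⋃₀ 𝒞 ∩ B) ⊆ ↑(C₀ \ B) := by
    rintro x ⟨⟨C, hC, hxC⟩, hxB⟩
    exact (hC.2.2 hxC).resolve_left fun h => hxB ⟨⟨C, hC, hxC⟩, h⟩
  have hUcard : (⋃₀ 𝒞).ncard ≤ ℓ * k := calc
    _ ≤ ℓ * (⋃₀ 𝒞 \ (⋃₀ 𝒞 ∩ B)).ncard := ncard_sUnion_le_mul_ncard_sdiff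
        (fun C hC => ⟨hC.1, hC.2.1⟩) (hB.subset inter_subset_right) inter_subset_left
    _ ≤ ℓ * k := Nat.mul_le_mul_left ℓ <| (ncard_le_ncard hUB (Finset.finite_toSet _)).trans
        (by rw [ncard_coe_finset]; exact (h𝒯 C₀ hC₀).2.2)
  calc (𝒯.filter (· \ B = C₀ \ B)).card ≤ hU.toFinset.powerset.card := by
        refine Finset.card_le_card fun C hC => ?_
        obtain ⟨hC𝒯, hCB⟩ := Finset.mem_filter.1 hC
        refine Finset.mem_powerset.2 fun x hx =>
          hU.mem_toFinset.2 ⟨C, ⟨(h𝒯 C hC𝒯).1, ?_, ?_⟩, hx⟩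
        · rw [ncard_coe_finset]; exact (h𝒯 C hC𝒯).2.1
        · rw [← hCB]
          intro y hy
          by_cases hyB : y ∈ B
          exacts [.inl hyB, .inr (Finset.mem_sdiff.2 ⟨hy, hyB⟩)]
    _ = 2 ^ (⋃₀ 𝒞).ncard := by rw [Finset.card_powerset, ncard_eq_toFinset_card _ hU]
    _ ≤ 2 ^ (ℓ * k) := Nat.pow_le_pow_right two_pos hUcard

lemma choose_ncard_le_of_forall_subset_isCircuit [M.Finite] {t : ℕ} (hB : M.Indep B)
    (h : ∀ X ⊆ B, X.ncard = t → ∃ C, M.IsCircuit C ∧ C.ncard = ℓ ∧ X ⊆ C) :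
    B.ncard.choose t ≤
      2 ^ ℓ * 2 ^ (ℓ * (ℓ - t)) * ((ℓ - t + 1) * (M.E.ncard + 1) ^ (ℓ - t)) := by
  classical
  lift B to Finset α using M.ground_finite.subset hB.subset_ground
  set E := M.ground_finite.toFinset
  set 𝒯 : Finset (Finset α) :=
    E.powerset.filter fun C => M.IsCircuit C ∧ C.card ≤ ℓ ∧ (C \ B).card ≤ ℓ - t
  have h𝒯 : ∀ C ∈ 𝒯, M.IsCircuit C ∧ C.card ≤ ℓ ∧ (C \ B).card ≤ ℓ - t :=
    fun C hC => (Finset.mem_filter.1 hC).2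
  have hcover : ∀ X ∈ B.powersetCard t, ∃ C ∈ 𝒯, X ⊆ C := by
    intro X hX
    obtain ⟨hXB, hXt⟩ := Finset.mem_powersetCard.1 hX
    obtain ⟨C, hC, hCℓ, hXC⟩ := h X (Finset.coe_subset.2 hXB) (by rw [ncard_coe_finset, hXt])
    lift C to Finset α using hC.finite
    rw [ncard_coe_finset] at hCℓ
    rw [Finset.coe_subset] at hXC
    refine ⟨C, Finset.mem_filter.2 ⟨Finset.mem_powerset.2 fun x hx =>
      M.ground_finite.mem_toFinset.2 (hC.subset_ground hx), hC, hCℓ.le, ?_⟩, hXC⟩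
    calc (C \ B).card ≤ (C \ X).card := Finset.card_le_card (Finset.sdiff_subset_sdiff le_rfl hXB)
      _ = ℓ - t := by rw [Finset.card_sdiff_of_subset hXC, hCℓ, hXt]
  have hsignatures : ∀ D ∈ 𝒯.image (· \ B), D ⊆ E ∧ D.card ≤ ℓ - t := by
    intro D hD
    obtain ⟨C, hC, rfl⟩ := Finset.mem_image.1 hD
    exact ⟨Finset.sdiff_subset.trans (Finset.mem_powerset.1 (Finset.mem_filter.1 hC).1),
      (h𝒯 C hC).2.2⟩
  calc (B : Set α).ncard.choose t = (B.powersetCard t).card := by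
        rw [ncard_coe_finset, Finset.card_powersetCard]
    _ ≤ 2 ^ ℓ * 𝒯.card := Finset.card_le_two_pow_mul_card_of_forall_subset hcover
        fun C hC => (h𝒯 C hC).2.1
    _ ≤ 2 ^ ℓ * (2 ^ (ℓ * (ℓ - t)) * (𝒯.image (· \ B)).card) :=
        Nat.mul_le_mul_left _ (card_le_two_pow_mul_card_image_sdiff hB h𝒯)
    _ ≤ 2 ^ ℓ * (2 ^ (ℓ * (ℓ - t)) * ((ℓ - t + 1) * (E.card + 1) ^ (ℓ - t))) := by
        gcongr; exact Finset.card_le_succ_mul_pow_of_forall_card_le hsignatures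
    _ = _ := by rw [ncard_eq_toFinset_card _ M.ground_finite, mul_assoc]

end Matroid

lemma HasQuadProperty.forall_mem_exists_isCocircuit {α : Type*} {M : Matroid α}
    {t₁ ℓ₁ t₂ ℓ₂ : ℕ} (h : HasQuadProperty M t₁ ℓ₁ t₂ ℓ₂) (ht₂ : 0 < t₂)
    (hE : t₂ ≤ M.E.ncard) : ∀ e ∈ M.E, ∃ K, M.IsCocircuit K ∧ K.ncard ≤ ℓ₂ ∧ e ∈ K := by
  intro e he
  obtain ⟨X, heX, hXE, hXt⟩ := exists_subsuperset_card_eq (singleton_subset_iff.2 he)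
    (by rwa [ncard_singleton]) hE
  obtain ⟨K, hK, hKℓ, hXK⟩ := h.2 X hXE hXt
  exact ⟨K, isCircuit_iff_isCircuit.1 hK, hKℓ.le, hXK (heX rfl)⟩

theorem exists_ncard_ground_lt_of_lt_two_mul {t₁ ℓ₁ t₂ ℓ₂ : ℕ} (ht₂ : 0 < t₂)
    (hlt : ℓ₁ < 2 * t₁) : ∃ N : ℕ, ∀ {α : Type u} (M : Matroid α), M.E.Finite →
      HasQuadProperty M t₁ ℓ₁ t₂ ℓ₂ → M.E.ncard < N := by
  set k := ℓ₁ - t₁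
  obtain ⟨R, hR⟩ := Nat.exists_lt_of_choose_le_mul_succ_pow (t := t₁) (k := k) (by omega)
    (2 ^ ℓ₁ * 2 ^ (ℓ₁ * k) * ((k + 1) * (ℓ₂ + 1) ^ k))
  refine ⟨ℓ₂ * R + t₂, fun M hE hQ => ?_⟩
  have : M.Finite := ⟨hE⟩
  obtain hn | hn := lt_or_ge M.E.ncard t₂
  · omega
  obtain ⟨B, hB⟩ := M.exists_isBase
  have hEB : M.E.ncard ≤ ℓ₂ * B.ncard := M.ncard_ground_le_mul_ncard_of_forall_mem_isCocircuit
    (hQ.forall_mem_exists_isCocircuit ht₂ hn) hB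
  have hBR : B.ncard < R := hR _ <| calc
    B.ncard.choose t₁ ≤ 2 ^ ℓ₁ * 2 ^ (ℓ₁ * k) * ((k + 1) * (M.E.ncard + 1) ^ k) :=
        M.choose_ncard_le_of_forall_subset_isCircuit hB.indep fun X hXB hXt => by
          simpa only [isCircuit_iff_isCircuit] using hQ.1 X (hXB.trans hB.subset_ground) hXt
    _ ≤ 2 ^ ℓ₁ * 2 ^ (ℓ₁ * k) * ((k + 1) * ((ℓ₂ + 1) * (B.ncard + 1)) ^ k) := by
        gcongr; nlinarith
    _ = _ := by rw [mul_pow]; ring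
  calc M.E.ncard ≤ ℓ₂ * B.ncard := hEB
    _ ≤ ℓ₂ * R := Nat.mul_le_mul_left _ hBR.le
    _ < ℓ₂ * R + t₂ := by omega

theorem statement4_general (t₁ ℓ₁ t₂ ℓ₂ : ℕ) (ht₁ : 0 < t₁) (ht₂ : 0 < t₂)
    (hlt : ℓ₁ < 2 * t₁ ∨ ℓ₂ < 2 * t₂) :
    ∃ N : ℕ, ∀ {α : Type u} (M : Matroid α), M.E.Finite →
      HasQuadProperty M t₁ ℓ₁ t₂ ℓ₂ → M.E.ncard < N := by
  rcases hlt with hlt | hlt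
  · exact exists_ncard_ground_lt_of_lt_two_mul ht₂ hlt
  · obtain ⟨N, hN⟩ := exists_ncard_ground_lt_of_lt_two_mul (ℓ₂ := ℓ₁) ht₁ hlt
    exact ⟨N, fun M hE hQ => hN M✶ hE hQ.dual⟩

theorem statement4 (t₁ ℓ₁ t₂ ℓ₂ : ℕ) (ht₁ : 0 < t₁) (hℓ₁ : 0 < ℓ₁) (ht₂ : 0 < t₂)
    (hℓ₂ : 0 < ℓ₂) (hlt : ℓ₁ < 2 * t₁ ∨ ℓ₂ < 2 * t₂) :
    ∃ N : ℕ, ∀ {α : Type u} (M : Matroid α), M.E.Finite →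
      HasQuadProperty M t₁ ℓ₁ t₂ ℓ₂ → M.E.ncard < N :=
  statement4_general t₁ ℓ₁ t₂ ℓ₂ ht₁ ht₂ hlt
end

section
/- Let M be a finite matroid with the (t,2t)-property, and let (S₁, …, S_n) be a t-echidna of M with n ≥ 3t − 1. Let I be a (t−1)-element subset of {1, …, n}. Then for every z ∈ E(M) − ⋃_{i∈I} S_i, there is a 2t-element circuit of M containing {z} ∪ ⋃_{i∈I} S_i, and there is a 2t-element cocircuit of M containing {z} ∪ ⋃_{i∈I} S_i. -/
/-!
A circuit and a cocircuit never meet in exactly one element. Suppose the pairs `S i` form a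
`t`-coechidna and `C` is a circuit. Since the pairs are disjoint, at most `|C|` of them meet `C`;
so if `n ≥ |C| + t - 1`, a pair `S a` meeting `C` can be completed by `t - 1` pairs avoiding `C`
to a cocircuit, and orthogonality forces `S a ⊆ C`.

In `M✶`, applied to a `2t`-element cocircuit through one element of each of `t` pairs, this shows
that a `t`-echidna with `n ≥ 3t - 1` is also a `t`-coechidna. The theorem follows by the same
argument applied to a `2t`-element circuit, and a `2t`-element cocircuit, through `z` and one
element of each `S i` with `i ∈ I`.
-/

open Set

open scoped Function Finset

/-- `M` has the `(t,ℓ)`-property: every `t`-element subset of the ground set is contained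
in an `ℓ`-element circuit and an `ℓ`-element cocircuit. -/
def HasTLProperty {α : Type*} (M : Matroid α) (t ℓ : ℕ) : Prop :=
  ∀ X ⊆ M.E, X.ncard = t →
    (∃ C, IsCircuit M C ∧ C.ncard = ℓ ∧ X ⊆ C) ∧
    (∃ C, IsCocircuit M C ∧ C.ncard = ℓ ∧ X ⊆ C)

/-- A `t`-echidna of order `n` in `M`: a partition `(S 1, …, S n)` of a subset of the
ground set into `2`-element sets such that the union of any `t` of them is a circuit. -/
def IsEchidna {α : Type*} (M : Matroid α) (t : ℕ) {n : ℕ} (S : Fin n → Set α) : Prop :=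
  (∀ i, (S i).ncard = 2) ∧ (∀ i, S i ⊆ M.E) ∧
    (∀ i j, i ≠ j → Disjoint (S i) (S j)) ∧
    ∀ I : Finset (Fin n), I.card = t → IsCircuit M (⋃ i ∈ I, S i)

section Echidna

variable {α : Type*} {M : Matroid α} {C : Set α}

lemma isCircuit_iff_matroid_isCircuit : IsCircuit M C ↔ M.IsCircuit C :=
  minimal_iff_forall_ssubset.symm

section Pairs

variable {ι : Type*} {S : ι → Set α}

lemma ncard_biUnion_of_ncard_eq {k : ℕ} (hS : ∀ i, (S i).ncard = k) (hk : k ≠ 0)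
    (hdisj : Pairwise (Disjoint on S)) (J : Finset ι) :
    (⋃ j ∈ J, S j).ncard = k * #J := by
  have hfin : ∀ i, (S i).Finite := fun i => finite_of_ncard_ne_zero (by rw [hS i]; exact hk)
  change (⋃ j ∈ (J : Set ι), S j).ncard = _
  rw [J.finite_toSet.ncard_biUnion (fun i _ => hfin i) (hdisj.set_pairwise _),
    finsum_mem_coe_finset]
  simp [hS, mul_comm]

lemma ncard_not_disjoint_le (hdisj : Pairwise (Disjoint on S)) (hC : C.Finite) :
    {j | ¬ Disjoint (S j) C}.ncard ≤ C.ncard := by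
  have := hC.to_subtype
  choose f hf using fun j : {j | ¬ Disjoint (S j) C} => not_disjoint_iff_nonempty_inter.1 j.2
  refine Nat.card_le_card_of_injective (fun j => (⟨f j, (hf j).2⟩ : C)) fun i j hij => ?_
  by_contra hne
  exact (hdisj (Subtype.coe_ne_coe.2 hne)).ne_of_mem (hf i).1 (hf j).1 (congrArg Subtype.val hij)

lemma exists_finset_forall_disjoint [Fintype ι] (hdisj : Pairwise (Disjoint on S))
    (hC : C.Finite) {m : ℕ} (hm : C.ncard + m ≤ Fintype.card ι) :
    ∃ G : Finset ι, #G = m ∧ ∀ j ∈ G, Disjoint (S j) C := by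
  classical
  have hbad : #{j | ¬ Disjoint (S j) C} ≤ C.ncard := by
    rw [← ncard_coe_finset, Finset.coe_filter_univ]
    exact ncard_not_disjoint_le hdisj hC
  have hgood : m ≤ #{j | Disjoint (S j) C} := by
    have := Finset.card_filter_add_card_filter_not (s := Finset.univ) (fun j => Disjoint (S j) C)
    rw [Finset.card_univ] at this
    omega
  obtain ⟨G, hG, hGcard⟩ := Finset.exists_subset_card_eq hgood
  exact ⟨G, hGcard, fun j hj => (Finset.mem_filter.1 (hG hj)).2⟩

lemma exists_transversal (hne : ∀ i, (S i).Nonempty) (hdisj : Pairwise (Disjoint on S))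
    (J : Finset ι) :
    ∃ T ⊆ ⋃ j ∈ J, S j, T.Finite ∧ T.ncard = #J ∧ ∀ j ∈ J, ¬ Disjoint (S j) T := by
  choose s hs using hne
  have hinj : InjOn s J := fun i _ j _ hij => by
    by_contra hne
    exact (hdisj hne).ne_of_mem (hs i) (hs j) hij
  refine ⟨s '' J, ?_, J.finite_toSet.image s, by rw [hinj.ncard_image, ncard_coe_finset],
    fun j hj => not_disjoint_iff.2 ⟨s j, hs j, j, hj, rfl⟩⟩
  rintro _ ⟨j, hj, rfl⟩
  exact mem_biUnion hj (hs j)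

lemma exists_inter_eq_singleton_of_ncard_eq_two {P : Set α} (hP : P.ncard = 2)
    (hmeet : ¬ Disjoint P C) (hsub : ¬ P ⊆ C) : ∃ e, P ∩ C = {e} := by
  have hPfin : P.Finite := finite_of_ncard_ne_zero (by omega)
  have hpos : 0 < (P ∩ C).ncard :=
    (ncard_pos (hPfin.inter_of_left C)).2 (not_disjoint_iff_nonempty_inter.1 hmeet)
  have hlt : (P ∩ C).ncard < 2 := hP ▸ ncard_lt_ncard (inter_ssubset_left_iff.2 hsub) hPfin
  exact ncard_eq_one.1 (by omega)

end Pairs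

def IsCoechidna (M : Matroid α) (t : ℕ) {n : ℕ} (S : Fin n → Set α) : Prop :=
  IsEchidna M✶ t S

variable {t n : ℕ} {S : Fin n → Set α}

lemma IsCoechidna.subset_of_not_disjoint (hS : IsCoechidna M t S) (ht : 0 < t)
    (hC : IsCircuit M C) (hCfin : C.Finite) (hn : C.ncard + (t - 1) ≤ n) {a : Fin n}
    (ha : ¬ Disjoint (S a) C) : S a ⊆ C := by
  obtain ⟨h2, -, hdisj, hco⟩ := hS
  by_contra hsub
  obtain ⟨e, he⟩ := exists_inter_eq_singleton_of_ncard_eq_two (h2 a) ha hsub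
  obtain ⟨G, hGcard, hG⟩ :=
    exists_finset_forall_disjoint (S := S) hdisj hCfin (m := t - 1) (by simpa using hn)
  have haG : a ∉ G := fun h => ha (hG a h)
  have hK : M.IsCocircuit (⋃ j ∈ insert a G, S j) := isCircuit_iff_matroid_isCircuit.1
    (hco _ (by rw [Finset.card_insert_of_notMem haG]; omega))
  refine (isCircuit_iff_matroid_isCircuit.1 hC).inter_isCocircuit_ne_singleton hK (e := e) ?_
  have hGC : ⋃ j ∈ G, C ∩ S j = ∅ :=
    iUnion_eq_empty.2 fun j => iUnion_eq_empty.2 fun hj => (hG j hj).symm.inter_eq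
  rw [Finset.set_biUnion_insert, inter_union_distrib_left, inter_comm, he, inter_iUnion₂, hGC,
    union_empty]

lemma IsCoechidna.biUnion_subset (hS : IsCoechidna M t S) (ht : 0 < t) (hC : IsCircuit M C)
    (hCfin : C.Finite) (hn : C.ncard + (t - 1) ≤ n) {J : Finset (Fin n)}
    (hJ : ∀ j ∈ J, ¬ Disjoint (S j) C) : ⋃ j ∈ J, S j ⊆ C :=
  iUnion₂_subset fun j hj => hS.subset_of_not_disjoint ht hC hCfin hn (hJ j hj)

lemma IsEchidna.exists_transversal (hS : IsEchidna M t S) (J : Finset (Fin n)) :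
    ∃ T ⊆ ⋃ j ∈ J, S j, T.Finite ∧ T.ncard = #J ∧ ∀ j ∈ J, ¬ Disjoint (S j) T :=
  _root_.exists_transversal (fun i => nonempty_of_ncard_ne_zero (by simp [hS.1 i])) hS.2.2.1 J

lemma IsEchidna.biUnion_subset_ground (hS : IsEchidna M t S) (J : Finset (Fin n)) :
    ⋃ j ∈ J, S j ⊆ M.E :=
  iUnion₂_subset fun j _ => hS.2.1 j

lemma IsEchidna.isCoechidna_dual (hS : IsEchidna M t S) : IsCoechidna M✶ t S := by
  rwa [IsCoechidna, Matroid.dual_dual]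

lemma IsEchidna.isCoechidna (hS : IsEchidna M t S) (ht : 0 < t)
    (hprop : HasTLProperty M t (2 * t)) (hn : 3 * t - 1 ≤ n) : IsCoechidna M t S := by
  refine ⟨hS.1, hS.2.1, hS.2.2.1, fun J hJ => ?_⟩
  obtain ⟨T, hTJ, -, hTcard, hTmeet⟩ := hS.exists_transversal J
  obtain ⟨-, K, hK, hKcard, hTK⟩ :=
    hprop T (hTJ.trans (hS.biUnion_subset_ground J)) (hTcard.trans hJ)
  have hKfin : K.Finite := finite_of_ncard_pos (by omega)
  have hJK : ⋃ j ∈ J, S j ⊆ K := hS.isCoechidna_dual.biUnion_subset ht hK hKfin (by omega)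
    fun j hj hdisj => hTmeet j hj (hdisj.mono_right hTK)
  have hJcard : (⋃ j ∈ J, S j).ncard = 2 * t := by
    rw [ncard_biUnion_of_ncard_eq hS.1 two_ne_zero hS.2.2.1, hJ]
  rwa [eq_of_subset_of_ncard_le hJK (by omega) hKfin]

end Echidna

theorem statement6_general {α : Type*} (M : Matroid α) (t n : ℕ) (ht : 0 < t)
    (hprop : HasTLProperty M t (2 * t)) (hn : 3 * t - 1 ≤ n)
    (S : Fin n → Set α) (hech : IsEchidna M t S)
    (I : Finset (Fin n)) (hI : I.card = t - 1)
    (z : α) (hz : z ∈ M.E \ ⋃ i ∈ I, S i) :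
    (∃ C, IsCircuit M C ∧ C.ncard = 2 * t ∧ insert z (⋃ i ∈ I, S i) ⊆ C) ∧
    (∃ C, IsCocircuit M C ∧ C.ncard = 2 * t ∧ insert z (⋃ i ∈ I, S i) ⊆ C) := by
  obtain ⟨hzE, hzI⟩ := hz
  obtain ⟨T, hTI, hTfin, hTcard, hTmeet⟩ := hech.exists_transversal I
  have hX : insert z T ⊆ M.E := insert_subset hzE (hTI.trans (hech.biUnion_subset_ground I))
  have hXcard : (insert z T).ncard = t := by
    rw [ncard_insert_of_notMem (fun h => hzI (hTI h)) hTfin, hTcard, hI]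
    omega
  have hmeet : ∀ D, insert z T ⊆ D → ∀ i ∈ I, ¬ Disjoint (S i) D := fun D hD i hi hdisj =>
    hTmeet i hi (hdisj.mono_right ((subset_insert z T).trans hD))
  obtain ⟨⟨C, hC, hCcard, hXC⟩, K, hK, hKcard, hXK⟩ := hprop _ hX hXcard
  refine ⟨⟨C, hC, hCcard, insert_subset (hXC (mem_insert z T)) ?_⟩,
    ⟨K, hK, hKcard, insert_subset (hXK (mem_insert z T)) ?_⟩⟩
  · exact (hech.isCoechidna ht hprop hn).biUnion_subset ht hC
      (finite_of_ncard_pos (by omega)) (by omega) (hmeet C hXC)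
  · exact hech.isCoechidna_dual.biUnion_subset ht hK
      (finite_of_ncard_pos (by omega)) (by omega) (hmeet K hXK)

theorem statement6 {α : Type*} (M : Matroid α) (hfin : M.E.Finite) (t n : ℕ) (ht : 0 < t)
    (hprop : HasTLProperty M t (2 * t)) (hn : 3 * t - 1 ≤ n)
    (S : Fin n → Set α) (hech : IsEchidna M t S)
    (I : Finset (Fin n)) (hI : I.card = t - 1)
    (z : α) (hz : z ∈ M.E \ ⋃ i ∈ I, S i) :
    (∃ C, IsCircuit M C ∧ C.ncard = 2 * t ∧ insert z (⋃ i ∈ I, S i) ⊆ C) ∧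
    (∃ C, IsCocircuit M C ∧ C.ncard = 2 * t ∧ insert z (⋃ i ∈ I, S i) ⊆ C) :=
  statement6_general M t n ht hprop hn S hech I hI z hz
end
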